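/- (Deterministic exponential forgetting.) Let M be an entrywise positive K×K row-stochastic matrix and let D_1, …, D_n be diagonal matrices with strictly positive diagonal entries. Then for any two interior probability row vectors p, p' ∈ ℝ^K, d(p M D_1 M D_2 ⋯ M D_n, p' M D_1 M D_2 ⋯ M D_n) ≤ τ(M)^n · d(p, p'), where d is the Hilbert projective metric and τ(M) < 1 is the Birkhoff contraction coefficient of M. In particular the Hilbert distance between the two filtered trajectories decays geometrically at rate τ(M), uniformly over the choice of the positive diagonal matrices D_i. -/

import Mathlib

/-- The Hilbert projective metric `d(x,y) = log ((max_i x_i/y_i) / (min_j x_j/y_j))`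
for entrywise positive vectors in `ℝ^K`. -/
noncomputable def hilbertDist {K : ℕ} (x y : Fin K → ℝ) : ℝ :=
  Real.log ((⨆ i, x i / y i) / (⨅ i, x i / y i))

/-- The Birkhoff contraction coefficient
`τ(M) = sup { d(xM, yM)/d(x,y) : x, y entrywise positive, d(x,y) > 0 }`. -/
noncomputable def birkhoff {K : ℕ} (M : Matrix (Fin K) (Fin K) ℝ) : ℝ :=
  sSup {t : ℝ | ∃ x y : Fin K → ℝ, (∀ i, 0 < x i) ∧ (∀ i, 0 < y i) ∧
    0 < hilbertDist x y ∧
    t = hilbertDist (Matrix.vecMul x M) (Matrix.vecMul y M) / hilbertDist x y}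

/-- The matrix products `P_n = M D₁ M D₂ ⋯ M D_n` built from `M` and the positive diagonal
matrices `D₁, D₂, …` (here `D n` is the diagonal of the `(n+1)`-st factor). -/
noncomputable def filterProd {K : ℕ} (M : Matrix (Fin K) (Fin K) ℝ)
    (D : ℕ → Fin K → ℝ) : ℕ → Matrix (Fin K) (Fin K) ℝ
  | 0 => 1
  | n + 1 => filterProd M D n * (M * Matrix.diagonal (D n))

/-!
For positive `x, y` put `l = log (x / y)`. Then `log ((x ᵥ* M) j / (y ᵥ* M) j) = φⱼ 1 - φⱼ 0` with
`φⱼ t = log ∑ i, y i * M i j * exp (t * l i)`, and `φⱼ' t - φₖ' t` is the difference of the means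
of `l` under two probability vectors `p, q` with `m² q ≤ p`, as soon as `m * M i k ≤ M i j` for
all `i, j, k`. Such a difference is at most `(1 - m²) (max l - min l)`, so `M` contracts the
Hilbert metric by the factor `1 - m² < 1`; hence `τ(M) < 1` and `d(xM, yM) ≤ τ(M) d(x, y)`.
Positive diagonal factors are isometries of `d`, and induction on `n` gives the bound.
-/

open Real Finset Matrix Filter Topology

section Fintype

variable {ι : Type*} [Fintype ι]

lemma sum_mul_sub_sum_mul_le {p q l : ι → ℝ} {θ L : ℝ} (hp : ∑ i, p i = 1)
    (hq : ∑ i, q i = 1) (hq0 : ∀ i, 0 ≤ q i) (hpq : ∀ i, θ * q i ≤ p i)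
    (hl : ∀ i k, l i - l k ≤ L) :
    ∑ i, p i * l i - ∑ i, q i * l i ≤ (1 - θ) * L := by
  have hmass : ∑ i, (p i - θ * q i) = 1 - θ := by
    rw [sum_sub_distrib, ← mul_sum, hp, hq, mul_one]
  -- `∑ q = 1` and `p - θ q ≥ 0` has mass `1 - θ`, so the difference of the means of `l` is a
  -- nonnegative combination of the pairwise differences `l i - l k`, with total weight `1 - θ`.
  calc ∑ i, p i * l i - ∑ i, q i * l i
      = ∑ i, ∑ k, (p i - θ * q i) * q k * (l i - l k) := by
        simp_rw [mul_sub, sum_sub_distrib, mul_assoc, ← mul_sum, ← sum_mul, hq]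
        simp_rw [hmass, one_mul, sub_mul, sum_sub_distrib, mul_assoc, ← mul_sum]
        ring
    _ ≤ ∑ i, ∑ k, (p i - θ * q i) * q k * L := by
        gcongr with i _ k _
        · exact mul_nonneg (sub_nonneg.2 (hpq i)) (hq0 k)
        · exact hl i k
    _ = (1 - θ) * L := by simp_rw [mul_assoc, ← mul_sum, ← sum_mul, hq, one_mul, hmass]

lemma sum_mul_div_sum_sub_le [Nonempty ι] {v w l : ι → ℝ} {m L : ℝ} (hm : 0 ≤ m)
    (hv : ∀ i, 0 < v i) (hw : ∀ i, 0 < w i) (hvw : ∀ i, m * w i ≤ v i)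
    (hwv : ∀ i, m * v i ≤ w i) (hl : ∀ i k, l i - l k ≤ L) :
    (∑ i, v i * l i) / ∑ i, v i - (∑ i, w i * l i) / ∑ i, w i ≤ (1 - m ^ 2) * L := by
  have hV : 0 < ∑ i, v i := sum_pos (fun i _ => hv i) univ_nonempty
  have hW : 0 < ∑ i, w i := sum_pos (fun i _ => hw i) univ_nonempty
  have hVW : m * ∑ i, v i ≤ ∑ i, w i := by
    rw [mul_sum]
    exact sum_le_sum fun i _ => hwv i
  have hpq : ∀ i, m ^ 2 * (w i / ∑ j, w j) ≤ v i / ∑ j, v j := by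
    intro i
    rw [← mul_div_assoc, div_le_div_iff₀ hW hV, sq, mul_assoc, mul_mul_mul_comm]
    exact mul_le_mul (hvw i) hVW (by positivity) (hv i).le
  have h := sum_mul_sub_sum_mul_le (l := l) (by rw [← sum_div, div_self hV.ne'])
    (by rw [← sum_div, div_self hW.ne']) (fun i => (div_pos (hw i) hW).le) hpq hl
  simpa only [div_mul_eq_mul_div, ← sum_div] using h

lemma hasDerivAt_log_sum_mul_exp [Nonempty ι] {u l : ι → ℝ} (hu : ∀ i, 0 < u i) (t : ℝ) :
    HasDerivAt (fun s => log (∑ i, u i * exp (s * l i)))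
      ((∑ i, u i * exp (t * l i) * l i) / ∑ i, u i * exp (t * l i)) t := by
  have hsum : HasDerivAt (fun s => ∑ i, u i * exp (s * l i))
      (∑ i, u i * exp (t * l i) * l i) t := by
    refine HasDerivAt.fun_sum fun i _ => ?_
    simpa only [mul_assoc] using ((hasDerivAt_mul_const (l i)).exp).const_mul (u i)
  exact hsum.log (sum_pos (fun i _ => mul_pos (hu i) (exp_pos _)) univ_nonempty).ne'

lemma log_sum_mul_exp_sub_le [Nonempty ι] {v w l : ι → ℝ} {m L : ℝ} (hm : 0 ≤ m)
    (hv : ∀ i, 0 < v i) (hw : ∀ i, 0 < w i) (hvw : ∀ i, m * w i ≤ v i)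
    (hwv : ∀ i, m * v i ≤ w i) (hl : ∀ i k, l i - l k ≤ L) :
    (log (∑ i, v i * exp (l i)) - log (∑ i, w i * exp (l i))) -
      (log (∑ i, v i) - log (∑ i, w i)) ≤ (1 - m ^ 2) * L := by
  have hf := fun t => (hasDerivAt_log_sum_mul_exp (l := l) hv t).fun_sub
    (hasDerivAt_log_sum_mul_exp (l := l) hw t)
  have hf' : ∀ t, deriv (fun s => log (∑ i, v i * exp (s * l i)) -
      log (∑ i, w i * exp (s * l i))) t ≤ (1 - m ^ 2) * L := by
    intro t
    rw [(hf t).deriv]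
    have hpos : ∀ i, 0 < exp (t * l i) := fun i => exp_pos _
    exact sum_mul_div_sum_sub_le hm (fun i => mul_pos (hv i) (hpos i))
      (fun i => mul_pos (hw i) (hpos i))
      (fun i => by rw [← mul_assoc]; exact mul_le_mul_of_nonneg_right (hvw i) (hpos i).le)
      (fun i => by rw [← mul_assoc]; exact mul_le_mul_of_nonneg_right (hwv i) (hpos i).le) hl
  simpa using image_sub_le_mul_sub_of_deriv_le (fun t => (hf t).differentiableAt) hf'
    zero_le_one

lemma vecMul_pos {x : ι → ℝ} {M : Matrix ι ι ℝ} (hx : ∀ i, 0 < x i)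
    (hM : ∀ i j, 0 < M i j) (j : ι) : 0 < (x ᵥ* M) j :=
  sum_pos (fun i _ => mul_pos (hx i) (hM i j)) ⟨j, mem_univ j⟩

lemma exists_pos_lt_one_forall_mul_le {M : Matrix ι ι ℝ} (hM : ∀ i j, 0 < M i j) :
    ∃ m, 0 < m ∧ m < 1 ∧ ∀ i j k, m * M i k ≤ M i j := by
  have h : ∀ᶠ m in 𝓝[>] (0 : ℝ), m < 1 ∧ ∀ i j k, m * M i k ≤ M i j := by
    refine nhdsWithin_le_nhds ((eventually_lt_nhds zero_lt_one).and ?_)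
    simp only [eventually_all]
    intro i j k
    have hlim : Tendsto (fun m => m * M i k) (𝓝 0) (𝓝 0) := by
      simpa using (tendsto_id (x := 𝓝 (0 : ℝ))).mul_const (M i k)
    exact (hlim.eventually (eventually_lt_nhds (hM i j))).mono fun _ => le_of_lt
  obtain ⟨m, ⟨hm1, hmM⟩, hm0⟩ := (h.and self_mem_nhdsWithin).exists
  exact ⟨m, hm0, hm1, hmM⟩

end Fintype

section HilbertMetric

variable {K : ℕ}

lemma hilbertDist_of_isEmpty [IsEmpty (Fin K)] (x y : Fin K → ℝ) : hilbertDist x y = 0 := by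
  simp [hilbertDist]

lemma hilbertDist_le_iff [Nonempty (Fin K)] {x y : Fin K → ℝ} (hx : ∀ i, 0 < x i)
    (hy : ∀ i, 0 < y i) {c : ℝ} :
    hilbertDist x y ≤ c ↔ ∀ i j, log (x i / y i) - log (x j / y j) ≤ c := by
  set r := fun i => x i / y i
  have hr : ∀ i, 0 < r i := fun i => div_pos (hx i) (hy i)
  obtain ⟨i₀, hi₀⟩ := exists_eq_ciSup_of_finite (f := r)
  obtain ⟨j₀, hj₀⟩ := exists_eq_ciInf_of_finite (f := r)
  have hd : hilbertDist x y = log (r i₀) - log (r j₀) := by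
    rw [hilbertDist, ← log_div (hr i₀).ne' (hr j₀).ne', hi₀, hj₀]
  refine hd ▸ ⟨fun h i j => le_trans ?_ h, fun h => h i₀ j₀⟩
  refine sub_le_sub (log_le_log (hr i) ?_) (log_le_log (hr j₀) ?_)
  · exact hi₀ ▸ le_ciSup (Finite.bddAbove_range r) i
  · exact hj₀ ▸ ciInf_le (Finite.bddBelow_range r) j

lemma hilbertDist_nonneg {x y : Fin K → ℝ} (hx : ∀ i, 0 < x i) (hy : ∀ i, 0 < y i) :
    0 ≤ hilbertDist x y := by
  rcases isEmpty_or_nonempty (Fin K) with _ | _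
  · rw [hilbertDist_of_isEmpty]
  · obtain ⟨i⟩ := ‹Nonempty (Fin K)›
    simpa using (hilbertDist_le_iff hx hy).1 le_rfl i i

lemma hilbertDist_mul_right {x y d : Fin K → ℝ} (hd : ∀ i, d i ≠ 0) :
    hilbertDist (x * d) (y * d) = hilbertDist x y := by
  simp only [hilbertDist, Pi.mul_apply, mul_div_mul_right _ _ (hd _)]

lemma hilbertDist_vecMul_le {M : Matrix (Fin K) (Fin K) ℝ} {m : ℝ} (hm : 0 ≤ m)
    (hM : ∀ i j, 0 < M i j) (hMm : ∀ i j k, m * M i k ≤ M i j) {x y : Fin K → ℝ}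
    (hx : ∀ i, 0 < x i) (hy : ∀ i, 0 < y i) :
    hilbertDist (x ᵥ* M) (y ᵥ* M) ≤ (1 - m ^ 2) * hilbertDist x y := by
  rcases isEmpty_or_nonempty (Fin K) with _ | _
  · simp [hilbertDist_of_isEmpty]
  rw [hilbertDist_le_iff (vecMul_pos hx hM) (vecMul_pos hy hM)]
  intro j k
  set l : Fin K → ℝ := fun i => log (x i / y i)
  have hxM : ∀ j, (x ᵥ* M) j = ∑ i, y i * M i j * exp (l i) := fun j => by
    refine (vecMul_apply_eq_sum _ _ _).trans <| sum_congr rfl fun i _ => ?_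
    rw [exp_log (div_pos (hx i) (hy i))]
    field_simp [(hy i).ne']
  have hpos : ∀ j i, 0 < y i * M i j := fun j i => mul_pos (hy i) (hM i j)
  have hcmp : ∀ j k i, m * (y i * M i k) ≤ y i * M i j := fun j k i => by
    rw [mul_left_comm]
    exact mul_le_mul_of_nonneg_left (hMm i j k) (hy i).le
  have := log_sum_mul_exp_sub_le hm (hpos j) (hpos k) (hcmp j k) (hcmp k j)
    ((hilbertDist_le_iff hx hy).1 le_rfl)
  rw [log_div (vecMul_pos hx hM j).ne' (vecMul_pos hy hM j).ne',
    log_div (vecMul_pos hx hM k).ne' (vecMul_pos hy hM k).ne', hxM, hxM]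
  simp only [vecMul_apply_eq_sum]
  linarith

end HilbertMetric

section Birkhoff

variable {K : ℕ} {M : Matrix (Fin K) (Fin K) ℝ}

lemma exists_hilbertDist_vecMul_le (hM : ∀ i j, 0 < M i j) :
    ∃ c, 0 ≤ c ∧ c < 1 ∧ ∀ x y : Fin K → ℝ, (∀ i, 0 < x i) → (∀ i, 0 < y i) →
      hilbertDist (x ᵥ* M) (y ᵥ* M) ≤ c * hilbertDist x y := by
  obtain ⟨m, hm0, hm1, hmM⟩ := exists_pos_lt_one_forall_mul_le hM
  exact ⟨1 - m ^ 2, by nlinarith, by nlinarith,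
    fun x y hx hy => hilbertDist_vecMul_le hm0.le hM hmM hx hy⟩

lemma birkhoff_le {c : ℝ} (hc : 0 ≤ c)
    (h : ∀ x y : Fin K → ℝ, (∀ i, 0 < x i) → (∀ i, 0 < y i) →
      hilbertDist (x ᵥ* M) (y ᵥ* M) ≤ c * hilbertDist x y) :
    birkhoff M ≤ c :=
  Real.sSup_le (by rintro t ⟨x, y, hx, hy, hd, rfl⟩; exact (div_le_iff₀ hd).2 (h x y hx hy)) hc

lemma birkhoff_lt_one (hM : ∀ i j, 0 < M i j) : birkhoff M < 1 := by
  obtain ⟨c, hc0, hc1, hc⟩ := exists_hilbertDist_vecMul_le hM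
  exact (birkhoff_le hc0 hc).trans_lt hc1

lemma birkhoff_nonneg (hM : ∀ i j, 0 < M i j) : 0 ≤ birkhoff M :=
  Real.sSup_nonneg <| by
    rintro t ⟨x, y, hx, hy, hd, rfl⟩
    exact div_nonneg (hilbertDist_nonneg (vecMul_pos hx hM) (vecMul_pos hy hM)) hd.le

lemma hilbertDist_vecMul_le_birkhoff_mul (hM : ∀ i j, 0 < M i j) {x y : Fin K → ℝ}
    (hx : ∀ i, 0 < x i) (hy : ∀ i, 0 < y i) :
    hilbertDist (x ᵥ* M) (y ᵥ* M) ≤ birkhoff M * hilbertDist x y := by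
  obtain ⟨c, -, -, hc⟩ := exists_hilbertDist_vecMul_le hM
  rcases (hilbertDist_nonneg hx hy).eq_or_lt with h | h
  · simpa [← h] using hc x y hx hy
  rw [← div_le_iff₀ h]
  refine le_csSup ⟨c, ?_⟩ ⟨x, y, hx, hy, h, rfl⟩
  rintro t ⟨x, y, hx, hy, hd, rfl⟩
  exact (div_le_iff₀ hd).2 (hc x y hx hy)

end Birkhoff

section FilterProd

variable {K : ℕ} {M : Matrix (Fin K) (Fin K) ℝ} {D : ℕ → Fin K → ℝ}

lemma vecMul_filterProd_succ (x : Fin K → ℝ) (n : ℕ) :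
    x ᵥ* filterProd M D (n + 1) = (x ᵥ* filterProd M D n ᵥ* M) * D n := by
  ext i
  simp [filterProd, ← vecMul_vecMul, vecMul_diagonal]

lemma vecMul_filterProd_pos (hM : ∀ i j, 0 < M i j) (hD : ∀ n i, 0 < D n i)
    {x : Fin K → ℝ} (hx : ∀ i, 0 < x i) (n : ℕ) (i : Fin K) :
    0 < (x ᵥ* filterProd M D n) i := by
  induction n generalizing i with
  | zero => simpa [filterProd] using hx i
  | succ n ih =>
    rw [vecMul_filterProd_succ]
    exact mul_pos (vecMul_pos ih hM i) (hD n i)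

lemma hilbertDist_vecMul_filterProd_le (hM : ∀ i j, 0 < M i j) (hD : ∀ n i, 0 < D n i)
    {x y : Fin K → ℝ} (hx : ∀ i, 0 < x i) (hy : ∀ i, 0 < y i) (n : ℕ) :
    hilbertDist (x ᵥ* filterProd M D n) (y ᵥ* filterProd M D n) ≤
      birkhoff M ^ n * hilbertDist x y := by
  induction n with
  | zero => simp [filterProd]
  | succ n ih =>
    rw [vecMul_filterProd_succ, vecMul_filterProd_succ,
      hilbertDist_mul_right fun i => (hD n i).ne', pow_succ', mul_assoc]
    calc _ ≤ birkhoff M * hilbertDist (x ᵥ* filterProd M D n) (y ᵥ* filterProd M D n) :=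
          hilbertDist_vecMul_le_birkhoff_mul hM (vecMul_filterProd_pos hM hD hx n)
            (vecMul_filterProd_pos hM hD hy n)
      _ ≤ _ := mul_le_mul_of_nonneg_left ih (birkhoff_nonneg hM)

end FilterProd

theorem deterministic_exponential_forgetting_general
    {K : ℕ}
    (M : Matrix (Fin K) (Fin K) ℝ) (hM_pos : ∀ i j, 0 < M i j)
    (D : ℕ → Fin K → ℝ) (hD_pos : ∀ n i, 0 < D n i)
    (p p' : Fin K → ℝ)
    (hp_pos : ∀ i, 0 < p i)
    (hp'_pos : ∀ i, 0 < p' i) :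
    birkhoff M < 1 ∧
      ∀ n : ℕ,
        hilbertDist (Matrix.vecMul p (filterProd M D n))
            (Matrix.vecMul p' (filterProd M D n)) ≤
          birkhoff M ^ n * hilbertDist p p' :=
  ⟨birkhoff_lt_one hM_pos, hilbertDist_vecMul_filterProd_le hM_pos hD_pos hp_pos hp'_pos⟩

/-- Deterministic exponential forgetting: for an entrywise positive row-stochastic matrix
`M`, any positive diagonal matrices `D₁, …, D_n`, and any interior probability vectors
`p, p'`, we have `d(p M D₁ ⋯ M D_n, p' M D₁ ⋯ M D_n) ≤ τ(M)^n d(p, p')`, with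
`τ(M) < 1`. -/
theorem deterministic_exponential_forgetting
    {K : ℕ} (hK : 0 < K)
    (M : Matrix (Fin K) (Fin K) ℝ) (hM_pos : ∀ i j, 0 < M i j)
    (hM_rowstoch : ∀ i, ∑ j, M i j = 1)
    (D : ℕ → Fin K → ℝ) (hD_pos : ∀ n i, 0 < D n i)
    (p p' : Fin K → ℝ)
    (hp_pos : ∀ i, 0 < p i) (hp_sum : ∑ i, p i = 1)
    (hp'_pos : ∀ i, 0 < p' i) (hp'_sum : ∑ i, p' i = 1) :
    birkhoff M < 1 ∧
      ∀ n : ℕ,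
        hilbertDist (Matrix.vecMul p (filterProd M D n))
            (Matrix.vecMul p' (filterProd M D n)) ≤
          birkhoff M ^ n * hilbertDist p p' :=
  deterministic_exponential_forgetting_general M hM_pos D hD_pos p p' hp_pos hp'_pos
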